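/- Let v_1,...,v_n be independent random variables supported on [v_min, v_max] with v_min ≥ 0, let ξ > 1, and let p ∈ ℝ^n be any price vector. Then there exists a price vector p'' with every coordinate in [ξ·v_min, v_max] such that E[R_{p''}] ≥ E[R_p] − ξ·v_min. (Here assume ξ·v_min ≤ v_max.) -/

import Mathlib

open MeasureTheory ProbabilityTheory

open scoped Classical in
/-- Revenue of a unit-demand buyer with valuations `v` facing prices `p`:
the buyer purchases the item `i` maximizing `v i - p i` provided `v i - p i ≥ 0`
(ties broken by smallest index), paying `p i`; revenue is `0` otherwise. -/
noncomputable def revenue {n : ℕ} (p v : Fin n → ℝ) : ℝ :=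
  let S : Finset (Fin n) :=
    Finset.univ.filter (fun i => 0 ≤ v i - p i ∧ ∀ j, v j - p j ≤ v i - p i)
  if h : S.Nonempty then p (S.min' h) else 0

/-!
Pointwise in the valuations `v ≤ vmax`, capping the prices at `vmax` keeps the purchased item's
price or replaces the purchase by one at price `vmax` (an item that now yields the same utility
`v i - vmax ≤ 0`), so revenue does not drop. Raising every price to at least `b ≥ 0` then keeps
the same purchase unless its price was below `b`, in which case at most `b` is lost. Integrating
this pointwise bound with `b = ξ * vmin` gives the theorem.
-/

namespace Revenue

variable {n : ℕ} {p q v : Fin n → ℝ} {i j k : Fin n}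

/-- The item bought in `revenue`; the strict inequality encodes the smallest-index tie-break. -/
def IsPurchase (p v : Fin n → ℝ) (i : Fin n) : Prop :=
  0 ≤ v i - p i ∧ (∀ j, v j - p j ≤ v i - p i) ∧ ∀ j < i, v j - p j < v i - p i

lemma IsPurchase.le_of_forall_le (hj : IsPurchase p v j) (hk : ∀ i, v i - p i ≤ v k - p k) :
    j ≤ k :=
  not_lt.1 fun hkj => (hj.2.2 k hkj).not_ge (hk j)

lemma IsPurchase.le (hi : IsPurchase p v i) : p i ≤ v i :=
  sub_nonneg.1 hi.1

lemma IsPurchase.of_le (hj : IsPurchase p v j) (hpq : ∀ i, p i ≤ q i) (hqj : q j = p j) :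
    IsPurchase q v j := by
  refine ⟨hqj ▸ hj.1, fun i => ?_, fun i hi => ?_⟩
  · linarith [hpq i, hj.2.1 i]
  · linarith [hpq i, hj.2.2 i hi]

lemma IsPurchase.unique (hj : IsPurchase p v j) (hk : IsPurchase p v k) : j = k :=
  le_antisymm (hj.le_of_forall_le hk.2.1) (hk.le_of_forall_le hj.2.1)

open scoped Classical in
lemma revenue_eq_of_isPurchase (hi : IsPurchase p v i) : revenue p v = p i := by
  set S := Finset.univ.filter (fun i => 0 ≤ v i - p i ∧ ∀ j, v j - p j ≤ v i - p i)
  have hiS : i ∈ S := Finset.mem_filter.2 ⟨Finset.mem_univ _, hi.1, hi.2.1⟩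
  have hmin : S.min' ⟨i, hiS⟩ = i :=
    le_antisymm (S.min'_le i hiS) <| S.le_min' _ _ fun k hk =>
      hi.le_of_forall_le (Finset.mem_filter.1 hk).2.2
  simp only [revenue]
  rw [dif_pos ⟨i, hiS⟩]
  exact congrArg p hmin

lemma revenue_eq_zero_of_forall_lt (h : ∀ i, v i < p i) : revenue p v = 0 := by
  simp only [revenue]
  rw [dif_neg]
  rintro ⟨i, hi⟩
  simp only [Finset.mem_filter] at hi
  linarith [h i, hi.2.1]

lemma exists_isPurchase (h : ∃ i, p i ≤ v i) : ∃ j, IsPurchase p v j := by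
  obtain ⟨i, hi⟩ := h
  let T := Finset.univ.filter fun k => ∀ j, v j - p j ≤ v k - p k
  obtain ⟨m, -, hm⟩ := Finset.univ.exists_max_image (fun k => v k - p k) ⟨i, Finset.mem_univ _⟩
  have hT : T.Nonempty := ⟨m, by simpa [T] using hm⟩
  have hjT := Finset.mem_filter.1 (T.min'_mem hT)
  refine ⟨T.min' hT, by linarith [hjT.2 i], hjT.2, fun k hk => (hjT.2 k).lt_of_ne fun heq => ?_⟩
  have hkT : k ∈ T := Finset.mem_filter.2 ⟨Finset.mem_univ _, fun j => heq ▸ hjT.2 j⟩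
  exact (T.min'_le k hkT).not_gt hk

lemma exists_isPurchase_or_forall_lt (p v : Fin n → ℝ) :
    (∃ j, IsPurchase p v j) ∨ ∀ i, v i < p i := by
  by_cases h : ∃ i, p i ≤ v i
  · exact .inl (exists_isPurchase h)
  · push Not at h
    exact .inr h

lemma revenue_nonneg (hp : ∀ i, p i ≤ v i → 0 ≤ p i) : 0 ≤ revenue p v := by
  rcases exists_isPurchase_or_forall_lt p v with ⟨j, hj⟩ | hnone
  · exact revenue_eq_of_isPurchase hj ▸ hp j hj.le
  · exact (revenue_eq_zero_of_forall_lt hnone).ge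

lemma abs_revenue_le (p v : Fin n → ℝ) : |revenue p v| ≤ ∑ i, |p i| := by
  have hsum : 0 ≤ ∑ i, |p i| := Finset.sum_nonneg fun i _ => abs_nonneg (p i)
  rcases exists_isPurchase_or_forall_lt p v with ⟨j, hj⟩ | hnone
  · rw [revenue_eq_of_isPurchase hj]
    exact Finset.single_le_sum (f := fun i => |p i|) (fun i _ => abs_nonneg _) (Finset.mem_univ j)
  · rwa [revenue_eq_zero_of_forall_lt hnone, abs_zero]

open scoped Classical in
lemma revenue_eq_sum (p v : Fin n → ℝ) :
    revenue p v = ∑ i, if IsPurchase p v i then p i else 0 := by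
  rcases exists_isPurchase_or_forall_lt p v with ⟨j, hj⟩ | hnone
  · rw [revenue_eq_of_isPurchase hj, Finset.sum_eq_single j
      (fun i _ hij => if_neg fun hi => hij (hi.unique hj)) (by simp), if_pos hj]
  · rw [revenue_eq_zero_of_forall_lt hnone]
    exact (Finset.sum_eq_zero fun i _ => if_neg fun hi => (hnone i).not_ge hi.le).symm

lemma measurableSet_isPurchase (p : Fin n → ℝ) (i : Fin n) :
    MeasurableSet {v | IsPurchase p v i} := by
  unfold IsPurchase
  measurability

lemma measurable_revenue (p : Fin n → ℝ) : Measurable (revenue p) := by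
  classical
  rw [funext (revenue_eq_sum p)]
  exact Finset.measurable_sum _ fun i _ =>
    Measurable.ite (measurableSet_isPurchase p i) measurable_const measurable_const

lemma revenue_le_revenue_min {c : ℝ} (hc : 0 ≤ c) (hv : ∀ i, v i ≤ c) :
    revenue p v ≤ revenue (fun i => min (p i) c) v := by
  set q := fun i => min (p i) c
  rcases exists_isPurchase_or_forall_lt p v with ⟨j, hj⟩ | hnone
  · have hqj : q j = p j := min_eq_left (hj.le.trans (hv j))
    have hq : ∀ i, v i - q i ≤ v j - p j := fun i => by
      rcases min_choice (p i) c with h | h <;> simp only [q, h]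
      · exact hj.2.1 i
      · linarith [hv i, hj.1]
    obtain ⟨k, hk⟩ := exists_isPurchase ⟨j, hqj ▸ hj.le⟩
    have hkj : v k - q k = v j - p j := le_antisymm (hq k) (hqj ▸ hk.2.1 j)
    rw [revenue_eq_of_isPurchase hj, revenue_eq_of_isPurchase hk]
    rcases min_choice (p k) c with h | h
    · -- `k` and `j` are both utility maximizers for `p` and for `q`, so the tie-break agrees
      have hkj' : k ≤ j := hk.le_of_forall_le fun i => hqj ▸ hq i
      have hjk : j ≤ k := hj.le_of_forall_le fun i => by
        simp only [q, h] at hkj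
        linarith [hj.2.1 i]
      rw [le_antisymm hkj' hjk, hqj]
    · simp only [q, h]
      linarith [hj.le, hv j]
  · rw [revenue_eq_zero_of_forall_lt hnone]
    refine revenue_nonneg fun i hi => ?_
    rcases min_choice (p i) c with h | h <;> simp only [q, h] at hi ⊢
    · linarith [hnone i]
    · exact hc

lemma revenue_sub_le_revenue_max {b : ℝ} (hb : 0 ≤ b) :
    revenue p v - b ≤ revenue (fun i => max (p i) b) v := by
  have hq : 0 ≤ revenue (fun i => max (p i) b) v :=
    revenue_nonneg fun i _ => hb.trans (le_max_right _ _)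
  rcases exists_isPurchase_or_forall_lt p v with ⟨j, hj⟩ | hnone
  · rw [revenue_eq_of_isPurchase hj]
    by_cases hpj : p j < b
    · linarith
    · have hqj : max (p j) b = p j := max_eq_left (not_lt.1 hpj)
      rw [revenue_eq_of_isPurchase (hj.of_le (fun i => le_max_left _ _) hqj), hqj]
      linarith
  · rw [revenue_eq_zero_of_forall_lt hnone]
    linarith

end Revenue

open Revenue

lemma integrable_revenue_comp {Ω : Type*} [MeasurableSpace Ω] (μ : Measure Ω) [IsFiniteMeasure μ]
    {n : ℕ} {V : Fin n → Ω → ℝ} (hV : ∀ i, Measurable (V i)) (p : Fin n → ℝ) :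
    Integrable (fun ω => revenue p (fun i => V i ω)) μ :=
  .of_bound ((measurable_revenue p).comp (measurable_pi_lambda _ hV)).aestronglyMeasurable
    (∑ i, |p i|) (.of_forall fun _ => abs_revenue_le p _)

theorem exists_restricted_price_vector_near_optimal_general
    {Ω : Type*} [MeasurableSpace Ω] (μ : Measure Ω) [IsProbabilityMeasure μ]
    {n : ℕ} (V : Fin n → Ω → ℝ) (hVmeas : ∀ i, Measurable (V i))
    (vmin vmax : ℝ) (hvmin : 0 ≤ vmin)
    (hsupp : ∀ i, ∀ᵐ ω ∂μ, V i ω ∈ Set.Icc vmin vmax)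
    (ξ : ℝ) (hξ : 1 < ξ) (hξle : ξ * vmin ≤ vmax)
    (p : Fin n → ℝ) :
    ∃ p'' : Fin n → ℝ, (∀ i, p'' i ∈ Set.Icc (ξ * vmin) vmax) ∧
      ∫ ω, revenue p (fun i => V i ω) ∂μ - ξ * vmin ≤
        ∫ ω, revenue p'' (fun i => V i ω) ∂μ := by
  have hb : 0 ≤ ξ * vmin := mul_nonneg (by linarith) hvmin
  set p'' := fun i => max (min (p i) vmax) (ξ * vmin)
  refine ⟨p'', fun i => ⟨le_max_right _ _, max_le (min_le_right _ _) hξle⟩, ?_⟩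
  have hpointwise : ∀ᵐ ω ∂μ,
      revenue p (fun i => V i ω) - ξ * vmin ≤ revenue p'' (fun i => V i ω) := by
    filter_upwards [ae_all_iff.2 hsupp] with ω hω
    calc revenue p (fun i => V i ω) - ξ * vmin
        ≤ revenue (fun i => min (p i) vmax) (fun i => V i ω) - ξ * vmin := by
          gcongr
          exact revenue_le_revenue_min (hb.trans hξle) fun i => (hω i).2
      _ ≤ revenue p'' (fun i => V i ω) := revenue_sub_le_revenue_max hb
  calc ∫ ω, revenue p (fun i => V i ω) ∂μ - ξ * vmin
      = ∫ ω, (revenue p (fun i => V i ω) - ξ * vmin) ∂μ := by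
        rw [integral_sub (integrable_revenue_comp μ hVmeas p) (integrable_const _)]
        simp
    _ ≤ ∫ ω, revenue p'' (fun i => V i ω) ∂μ :=
      integral_mono_ae ((integrable_revenue_comp μ hVmeas p).sub (integrable_const _))
        (integrable_revenue_comp μ hVmeas p'') hpointwise

theorem exists_restricted_price_vector_near_optimal
    {Ω : Type*} [MeasurableSpace Ω] (μ : Measure Ω) [IsProbabilityMeasure μ]
    {n : ℕ} (V : Fin n → Ω → ℝ) (hVmeas : ∀ i, Measurable (V i))
    (hindep : iIndepFun V μ)
    (vmin vmax : ℝ) (hvmin : 0 ≤ vmin)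
    (hsupp : ∀ i, ∀ᵐ ω ∂μ, V i ω ∈ Set.Icc vmin vmax)
    (ξ : ℝ) (hξ : 1 < ξ) (hξle : ξ * vmin ≤ vmax)
    (p : Fin n → ℝ) :
    ∃ p'' : Fin n → ℝ, (∀ i, p'' i ∈ Set.Icc (ξ * vmin) vmax) ∧
      ∫ ω, revenue p (fun i => V i ω) ∂μ - ξ * vmin ≤
        ∫ ω, revenue p'' (fun i => V i ω) ∂μ :=
  exists_restricted_price_vector_near_optimal_general μ V hVmeas vmin vmax hvmin hsupp ξ hξ hξle p
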